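/- Let X be a continuum (a compact connected metric space with more than one point), let n ≥ 2 be an integer, and let f : X → X be a continuous map. Then f is cofinitely sensitive if and only if F_n(f) is cofinitely sensitive; moreover, if SF_n(f) is cofinitely sensitive, then F_n(f) is cofinitely sensitive. -/

import Mathlib

open Metric Set TopologicalSpace

variable (X : Type*) [MetricSpace X] (n : ℕ)

/-- The `n`-fold symmetric product `F_n(X)`: nonempty subsets of `X` with at most `n`
points, as a subspace of the nonempty compact subsets of `X` with the Hausdorff metric. -/
abbrev Fn := {A : NonemptyCompacts X // (A : Set X).Finite ∧ (A : Set X).ncard ≤ n}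

/-- The induced map `F_n(f)` on the `n`-fold symmetric product, `A ↦ f(A)`. -/
noncomputable def FnMap (f : X → X) : Fn X n → Fn X n := fun A =>
  ⟨⟨⟨f '' (A.1 : Set X), (A.2.1.image f).isCompact⟩, A.1.nonempty.image f⟩,
    A.2.1.image f, le_trans (Set.ncard_image_le A.2.1) A.2.2⟩

/-- `F_1(X) ⊆ F_n(X)`: the set of singletons. -/
def F1 : Set (Fn X n) := {A | ∃ x : X, (A.1 : Set X) = {x}}

/-- The setoid collapsing `F_1(X)` to a point. -/
def SFnSetoid : Setoid (Fn X n) where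
  r A B := A = B ∨ (A ∈ F1 X n ∧ B ∈ F1 X n)
  iseqv := by
    refine ⟨fun _ => Or.inl rfl, fun h => h.imp Eq.symm And.symm, fun h₁ h₂ => ?_⟩
    rcases h₁ with rfl | h₁
    · exact h₂
    · rcases h₂ with rfl | h₂
      · exact Or.inr h₁
      · exact Or.inr ⟨h₁.1, h₂.2⟩

/-- The `n`-fold symmetric product suspension `SF_n(X) = F_n(X)/F_1(X)`,
with the quotient topology. -/
abbrev SFn := Quotient (SFnSetoid X n)

/-- The quotient map `q : F_n(X) → SF_n(X)`. -/
def SFnQ : Fn X n → SFn X n := Quotient.mk (SFnSetoid X n)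

/-- The induced map `SF_n(f)` on the suspension, with `SF_n(f) ∘ q = q ∘ F_n(f)`. -/
noncomputable def SFnMap (f : X → X) : SFn X n → SFn X n :=
  Quotient.lift (fun A => SFnQ X n (FnMap X n f A))
    (fun A B h => Quotient.sound (by
      rcases h with rfl | ⟨⟨x, hx⟩, ⟨y, hy⟩⟩
      · exact Or.inl rfl
      · exact Or.inr ⟨⟨f x, by simp [FnMap, hx]⟩, ⟨f y, by simp [FnMap, hy]⟩⟩))

/-- The metric `ρ` on `SF_n(X)`:
`ρ(χ₁,χ₂) = H(F_1(X) ∪ q⁻¹(χ₁), F_1(X) ∪ q⁻¹(χ₂))` where `H` is the Hausdorff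
distance between subsets of `F_n(X)`. -/
noncomputable def SFnDist : SFn X n → SFn X n → ℝ := fun a b =>
  Metric.hausdorffDist (F1 X n ∪ SFnQ X n ⁻¹' {a}) (F1 X n ∪ SFnQ X n ⁻¹' {b})

/-- `g` is cofinitely sensitive (w.r.t. a distance function `d` and the topology of `Z`). -/
def CofinitelySensitive {Z : Type*} [TopologicalSpace Z] (d : Z → Z → ℝ) (g : Z → Z) : Prop :=
  ∃ δ : ℝ, 0 < δ ∧ ∃ N : ℕ, ∀ U : Set Z, IsOpen U → U.Nonempty → ∀ k : ℕ, N < k →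
    ∃ x ∈ U, ∃ y ∈ U, δ < d (g^[k] x) (g^[k] y)

/-!
If `f^k` separates two points of every `ε/2`-ball by more than `δ`, then around any `A ∈ F_n(X)`
we may move each point of `A` by less than `ε/2` so that its `k`-th image lies `δ/2` away from
`f^k(a₀)` for a fixed `a₀ ∈ A`; the moved set and `A` are `ε`-close while their `k`-th images are
`δ/2` apart in the Hausdorff metric. Conversely, `{A | A ⊆ U}` is an open subset of `F_n(X)`
containing a singleton, and a Hausdorff distance larger than `δ` is witnessed by two points.

For the suspension, `q` is `1`-Lipschitz from `d_H` to `ρ` and is open on open sets missing the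
closed set `F_1(X)`. Since a continuum has no isolated points, `F_1(X)` has empty interior, so
every nonempty open set of `F_n(X)` contains such a set.
-/

open Topology

section HausdorffDist

variable {α : Type*} [PseudoMetricSpace α] {s t : Set α} {r : ℝ}

lemma hausdorffDist_image_le_of_dist_le (g : α → α) (hr : 0 ≤ r)
    (h : ∀ a ∈ s, dist (g a) a ≤ r) : hausdorffDist (g '' s) s ≤ r :=
  hausdorffDist_le_of_mem_dist hr (by rintro _ ⟨a, ha, rfl⟩; exact ⟨a, ha, h a ha⟩)
    fun a ha => ⟨g a, mem_image_of_mem g ha, by rw [dist_comm]; exact h a ha⟩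

lemma hausdorffDist_insert_insert_le (a b : α) (s : Set α) :
    hausdorffDist (insert a s) (insert b s) ≤ dist a b := by
  refine hausdorffDist_le_of_mem_dist dist_nonneg ?_ ?_
  · rintro x (rfl | hx)
    · exact ⟨b, mem_insert b s, le_rfl⟩
    · exact ⟨x, mem_insert_of_mem b hx, by simp⟩
  · rintro x (rfl | hx)
    · exact ⟨a, mem_insert a s, (dist_comm x a).le⟩
    · exact ⟨x, mem_insert_of_mem a hx, by simp⟩

lemma le_hausdorffDist_of_le_dist {x : α} (hx : x ∈ s) (ht : t.Nonempty)
    (fin : hausdorffEDist s t ≠ ⊤) (h : ∀ y ∈ t, r ≤ dist x y) : r ≤ hausdorffDist s t :=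
  ((le_infDist ht).2 h).trans (infDist_le_hausdorffDist_of_mem hx fin)

lemma exists_lt_dist_of_lt_hausdorffDist (hs : s.Nonempty) (ht : t.Nonempty) (hr : 0 ≤ r)
    (h : r < hausdorffDist s t) : ∃ x ∈ s, ∃ y ∈ t, r < dist x y := by
  by_contra! hc
  obtain ⟨x₀, hx₀⟩ := hs
  obtain ⟨y₀, hy₀⟩ := ht
  refine h.not_ge (hausdorffDist_le_of_mem_dist hr (fun x hx => ⟨y₀, hy₀, hc x hx y₀ hy₀⟩)
    fun y hy => ⟨x₀, hx₀, ?_⟩)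
  rw [dist_comm]
  exact hc x₀ hx₀ y hy

end HausdorffDist

section SymmetricProduct

variable {X n}

namespace Fn

lemma dist_eq (A B : Fn X n) : dist A B = hausdorffDist (A.1 : Set X) B.1 := rfl

lemma hausdorffEDist_ne_top (A B : Fn X n) : hausdorffEDist (A.1 : Set X) B.1 ≠ ⊤ :=
  edist_ne_top A.1 B.1

def ofFinite (s : Set X) (hs : s.Finite) (hne : s.Nonempty) (hcard : s.ncard ≤ n) : Fn X n :=
  ⟨⟨⟨s, hs.isCompact⟩, hne⟩, hs, hcard⟩

@[simp]
lemma coe_ofFinite (s : Set X) (hs : s.Finite) (hne : s.Nonempty) (hcard : s.ncard ≤ n) :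
    ((ofFinite s hs hne hcard).1 : Set X) = s :=
  rfl

lemma coe_fnMap_iterate (f : X → X) (k : ℕ) (A : Fn X n) :
    (((FnMap X n f)^[k] A).1 : Set X) = f^[k] '' A.1 := by
  induction k with
  | zero => simp
  | succ k ih =>
    rw [Function.iterate_succ_apply', Function.iterate_succ', image_comp, ← ih]
    rfl

lemma isOpen_setOf_subset {U : Set X} (hU : IsOpen U) :
    IsOpen {A : Fn X n | (A.1 : Set X) ⊆ U} := by
  refine Metric.isOpen_iff.2 fun A hA => ?_
  obtain ⟨ε, hε, hsub⟩ := A.1.isCompact.exists_thickening_subset_open hU hA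
  refine ⟨ε, hε, fun B hB x hx => hsub ?_⟩
  rw [mem_thickening_iff_infDist_lt A.1.nonempty]
  exact (infDist_le_hausdorffDist_of_mem hx (hausdorffEDist_ne_top B A)).trans_lt hB

lemma mem_F1_iff_subsingleton {A : Fn X n} : A ∈ F1 X n ↔ (A.1 : Set X).Subsingleton := by
  obtain ⟨x, hx⟩ := A.1.nonempty
  exact ⟨fun ⟨y, hy⟩ => hy ▸ subsingleton_singleton,
    fun h => ⟨x, (subsingleton_iff_singleton hx).1 h⟩⟩

lemma isClosed_F1 : IsClosed (F1 X n) := by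
  refine isOpen_compl_iff.1 (Metric.isOpen_iff.2 fun A hA => ?_)
  obtain ⟨x, hx, y, hy, hxy⟩ := not_subsingleton_iff.1 (mt mem_F1_iff_subsingleton.2 hA)
  refine ⟨dist x y / 2, half_pos (dist_pos.2 hxy), fun B hB hB1 => ?_⟩
  rw [mem_ball, dist_comm, dist_eq] at hB
  obtain ⟨x', hx', hxx'⟩ := exists_dist_lt_of_hausdorffDist_lt hx hB (hausdorffEDist_ne_top A B)
  obtain ⟨y', hy', hyy'⟩ := exists_dist_lt_of_hausdorffDist_lt hy hB (hausdorffEDist_ne_top A B)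
  obtain rfl : x' = y' := mem_F1_iff_subsingleton.1 hB1 hx' hy'
  linarith [dist_triangle_right x y x']

lemma dense_compl_F1 [PerfectSpace X] (hn : 2 ≤ n) : Dense (F1 X n)ᶜ := by
  refine interior_eq_empty_iff_dense_compl.1 (eq_empty_of_forall_notMem fun A hA => ?_)
  obtain ⟨ε, hε, hball⟩ := Metric.isOpen_iff.1 isOpen_interior A hA
  obtain ⟨x, hx⟩ := interior_subset hA
  obtain ⟨y, hyx, hyε⟩ :=
    (𝓝[≠] x).nonempty_of_mem (inter_mem_nhdsWithin {x}ᶜ (ball_mem_nhds x hε))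
  let B : Fn X n :=
    ofFinite {y, x} (toFinite _) (insert_nonempty y {x}) ((ncard_pair hyx).trans_le hn)
  have hB : B ∈ ball A ε := by
    have hyx' := hausdorffDist_insert_insert_le y x {x}
    rw [insert_eq_of_mem (mem_singleton x)] at hyx'
    rw [mem_ball, dist_eq, coe_ofFinite, hx]
    exact hyx'.trans_lt hyε
  exact hyx (mem_F1_iff_subsingleton.1 (interior_subset (hball hB)) (mem_insert y {x})
    (mem_insert_of_mem y rfl))

end Fn

section Suspension

lemma SFnQ_eq_SFnQ_iff {A B : Fn X n} :
    SFnQ X n A = SFnQ X n B ↔ A = B ∨ (A ∈ F1 X n ∧ B ∈ F1 X n) :=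
  Quotient.eq

lemma F1_union_SFnQ_preimage (A : Fn X n) :
    F1 X n ∪ SFnQ X n ⁻¹' {SFnQ X n A} = insert A (F1 X n) := by
  ext B
  simp only [mem_union, mem_preimage, mem_singleton_iff, mem_insert_iff, SFnQ_eq_SFnQ_iff]
  tauto

lemma SFnDist_SFnQ_le (A B : Fn X n) : SFnDist X n (SFnQ X n A) (SFnQ X n B) ≤ dist A B := by
  rw [SFnDist, F1_union_SFnQ_preimage, F1_union_SFnQ_preimage]
  exact hausdorffDist_insert_insert_le A B _

lemma SFnQ_preimage_image_of_disjoint {V : Set (Fn X n)} (hV : Disjoint V (F1 X n)) :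
    SFnQ X n ⁻¹' (SFnQ X n '' V) = V := by
  refine (subset_preimage_image _ _).antisymm' ?_
  rintro B ⟨A, hA, hAB⟩
  rcases SFnQ_eq_SFnQ_iff.1 hAB with rfl | ⟨hA1, -⟩
  · exact hA
  · exact absurd hA1 (hV.notMem_of_mem_left hA)

lemma isOpen_SFnQ_image {V : Set (Fn X n)} (hV : IsOpen V) (hV1 : Disjoint V (F1 X n)) :
    IsOpen (SFnQ X n '' V) := by
  refine isOpen_coinduced.2 ?_
  change IsOpen (SFnQ X n ⁻¹' (SFnQ X n '' V))
  rwa [SFnQ_preimage_image_of_disjoint hV1]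

lemma sFnMap_iterate_SFnQ (f : X → X) (k : ℕ) (A : Fn X n) :
    (SFnMap X n f)^[k] (SFnQ X n A) = SFnQ X n ((FnMap X n f)^[k] A) := by
  induction k with
  | zero => rfl
  | succ k ih => rw [Function.iterate_succ_apply', Function.iterate_succ_apply', ih]; rfl

end Suspension

namespace CofinitelySensitive

variable {f : X → X}

theorem fnMap (h : CofinitelySensitive dist f) : CofinitelySensitive dist (FnMap X n f) := by
  obtain ⟨δ, hδ, N, hsens⟩ := h
  refine ⟨δ / 4, by positivity, N, fun U hU ⟨A, hA⟩ k hk => ?_⟩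
  obtain ⟨ε, hε, hball⟩ := Metric.isOpen_iff.1 hU A hA
  obtain ⟨a₀, ha₀⟩ := A.1.nonempty
  have hfar : ∀ a : X, ∃ v, dist v a < ε / 2 ∧ δ / 2 ≤ dist (f^[k] a₀) (f^[k] v) := by
    intro a
    obtain ⟨u, hu, w, hw, huw⟩ :=
      hsens (ball a (ε / 2)) isOpen_ball ⟨a, mem_ball_self (half_pos hε)⟩ k hk
    by_cases hu' : δ / 2 ≤ dist (f^[k] a₀) (f^[k] u)
    · exact ⟨u, hu, hu'⟩
    · refine ⟨w, hw, ?_⟩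
      linarith [dist_triangle_left (f^[k] u) (f^[k] w) (f^[k] a₀)]
  choose v hv hvfar using hfar
  refine ⟨A, hA, FnMap X n v A, hball ?_, ?_⟩
  · rw [mem_ball, Fn.dist_eq]
    exact (hausdorffDist_image_le_of_dist_le v (half_pos hε).le fun a _ => (hv a).le).trans_lt
      (half_lt_self hε)
  · have hsep : δ / 2 ≤ dist ((FnMap X n f)^[k] A) ((FnMap X n f)^[k] (FnMap X n v A)) := by
      refine le_hausdorffDist_of_le_dist (x := f^[k] a₀) ?_ (NonemptyCompacts.nonempty _)
        (Fn.hausdorffEDist_ne_top _ _) ?_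
      · rw [Fn.coe_fnMap_iterate]
        exact mem_image_of_mem _ ha₀
      · rw [Fn.coe_fnMap_iterate]
        rintro _ ⟨_, ⟨a, -, rfl⟩, rfl⟩
        exact hvfar a
    linarith

theorem of_fnMap (hn : 1 ≤ n) (h : CofinitelySensitive dist (FnMap X n f)) :
    CofinitelySensitive dist f := by
  obtain ⟨δ, hδ, N, hsens⟩ := h
  refine ⟨δ, hδ, N, fun U hU ⟨x, hx⟩ k hk => ?_⟩
  let x' : Fn X n :=
    Fn.ofFinite {x} (finite_singleton x) (singleton_nonempty x) ((ncard_singleton x).trans_le hn)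
  obtain ⟨A, hA, B, hB, hAB⟩ :=
    hsens _ (Fn.isOpen_setOf_subset hU) ⟨x', singleton_subset_iff.2 hx⟩ k hk
  rw [Fn.dist_eq, Fn.coe_fnMap_iterate, Fn.coe_fnMap_iterate] at hAB
  obtain ⟨_, ⟨a, ha, rfl⟩, _, ⟨b, hb, rfl⟩, hab⟩ := exists_lt_dist_of_lt_hausdorffDist
    (A.1.nonempty.image _) (B.1.nonempty.image _) hδ.le hAB
  exact ⟨a, hA ha, b, hB hb, hab⟩

theorem fnMap_of_sFnMap [PerfectSpace X] (hn : 2 ≤ n)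
    (h : CofinitelySensitive (SFnDist X n) (SFnMap X n f)) :
    CofinitelySensitive dist (FnMap X n f) := by
  obtain ⟨δ, hδ, N, hsens⟩ := h
  refine ⟨δ, hδ, N, fun U hU hUne k hk => ?_⟩
  have hV : IsOpen (U \ F1 X n) := hU.sdiff Fn.isClosed_F1
  have hVne : (U \ F1 X n).Nonempty := (Fn.dense_compl_F1 hn).inter_open_nonempty U hU hUne
  obtain ⟨_, ⟨A, hA, rfl⟩, _, ⟨B, hB, rfl⟩, hAB⟩ :=
    hsens _ (isOpen_SFnQ_image hV disjoint_sdiff_left) (hVne.image _) k hk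
  rw [sFnMap_iterate_SFnQ, sFnMap_iterate_SFnQ] at hAB
  exact ⟨A, hA.1, B, hB.1, hAB.trans_le (SFnDist_SFnQ_le _ _)⟩

end CofinitelySensitive

end SymmetricProduct

theorem stmt1_general (X : Type*) [MetricSpace X] [ConnectedSpace X] [Nontrivial X]
    (n : ℕ) (hn : 2 ≤ n) (f : X → X) :
    (CofinitelySensitive (dist : X → X → ℝ) f ↔ CofinitelySensitive dist (FnMap X n f)) ∧
    (CofinitelySensitive (SFnDist X n) (SFnMap X n f) →
      CofinitelySensitive dist (FnMap X n f)) :=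
  ⟨⟨CofinitelySensitive.fnMap, CofinitelySensitive.of_fnMap (by omega)⟩,
    CofinitelySensitive.fnMap_of_sFnMap hn⟩

theorem stmt1 (X : Type*) [MetricSpace X] [CompactSpace X] [ConnectedSpace X] [Nontrivial X]
    (n : ℕ) (hn : 2 ≤ n) (f : X → X) (hf : Continuous f) :
    (CofinitelySensitive (dist : X → X → ℝ) f ↔ CofinitelySensitive dist (FnMap X n f)) ∧
    (CofinitelySensitive (SFnDist X n) (SFnMap X n f) →
      CofinitelySensitive dist (FnMap X n f)) :=
  stmt1_general X n hn f
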